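/- Let (A, ⟨⟨-,-⟩⟩, μ) be a double Hamiltonian algebra over A₀ (A₀-linear double Poisson bracket with moment map μ) and let φ be a bracket-compatible involutive anti-automorphism of A. Then μ' := (1/2)(μ − φ(μ)) is again a moment map for (A, ⟨⟨-,-⟩⟩), and it satisfies μ' + φ(μ') = 0. -/
import Mathlib


open TensorProduct

noncomputable section

namespace Stmt3

variable {A : Type*} [Ring A] [Algebra ℂ A]

/-- The flip `(c ⊗ d)^∘ = d ⊗ c` on `A ⊗[ℂ] A`. -/
def flipT : A ⊗[ℂ] A →ₗ[ℂ] A ⊗[ℂ] A := (TensorProduct.comm ℂ A A).toLinearMap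

/-- The outer bimodule structure `a ⬝ (d' ⊗ d'') ⬝ b = (a d') ⊗ (d'' b)`. -/
def outerAct (a b : A) : A ⊗[ℂ] A →ₗ[ℂ] A ⊗[ℂ] A :=
  TensorProduct.map (LinearMap.mulLeft ℂ a) (LinearMap.mulRight ℂ b)

/-- The inner bimodule structure `a ∗ (d' ⊗ d'') ∗ b = (d' b) ⊗ (a d'')`. -/
def innerAct (a b : A) : A ⊗[ℂ] A →ₗ[ℂ] A ⊗[ℂ] A :=
  TensorProduct.map (LinearMap.mulRight ℂ b) (LinearMap.mulLeft ℂ a)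

/-- Axioms of a double bracket on `A`. -/
structure IsDoubleBracket (br : A →ₗ[ℂ] A →ₗ[ℂ] A ⊗[ℂ] A) : Prop where
  cyclic : ∀ a b : A, br a b = - flipT (br b a)
  right_der : ∀ a b c : A, br a (b * c) = outerAct 1 c (br a b) + outerAct b 1 (br a c)
  left_der : ∀ a b c : A, br (b * c) a = innerAct 1 c (br b a) + innerAct b 1 (br c a)

/-- `τ₍₁₂₃₎ : (a₁ ⊗ a₂) ⊗ a₃ ↦ (a₃ ⊗ a₁) ⊗ a₂`. -/
def cyc3 : (A ⊗[ℂ] A) ⊗[ℂ] A →ₗ[ℂ] (A ⊗[ℂ] A) ⊗[ℂ] A :=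
  ((TensorProduct.comm ℂ (A ⊗[ℂ] A) A).trans (TensorProduct.assoc ℂ A A A).symm).toLinearMap

/-- The left extension of a double bracket. -/
def brL (br : A →ₗ[ℂ] A →ₗ[ℂ] A ⊗[ℂ] A) (a : A) :
    A ⊗[ℂ] A →ₗ[ℂ] (A ⊗[ℂ] A) ⊗[ℂ] A :=
  TensorProduct.map (br a) LinearMap.id

/-- The double Jacobiator of a double bracket. -/
def tripleBr (br : A →ₗ[ℂ] A →ₗ[ℂ] A ⊗[ℂ] A) (a b c : A) : (A ⊗[ℂ] A) ⊗[ℂ] A :=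
  brL br a (br b c) + cyc3 (brL br b (br c a)) + cyc3 (cyc3 (brL br c (br a b)))

/-- The double bracket is Poisson: the double Jacobiator vanishes identically. -/
def IsPoisson (br : A →ₗ[ℂ] A →ₗ[ℂ] A ⊗[ℂ] A) : Prop :=
  ∀ a b c : A, tripleBr br a b c = 0

variable {I : Type*} [Fintype I] [DecidableEq I]

/-- `(e s)` is a complete family of orthogonal idempotents. -/
def IsCompleteOrthIdem (e : I → A) : Prop :=
  (∀ s t : I, e s * e t = if s = t then e s else 0) ∧ (∑ s, e s = 1)

/-- `A₀`-linearity of a double bracket. -/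
def IsA0Linear (br : A →ₗ[ℂ] A →ₗ[ℂ] A ⊗[ℂ] A) (e : I → A) : Prop :=
  ∀ (s : I) (a : A), br (e s) a = 0 ∧ br a (e s) = 0

/-- `μ` is a moment map for the double Poisson bracket. -/
def IsMomentMap (br : A →ₗ[ℂ] A →ₗ[ℂ] A ⊗[ℂ] A) (e : I → A) (μ : A) : Prop :=
  (μ = ∑ s, e s * μ * e s) ∧
  ∀ (s : I) (a : A),
    br (e s * μ * e s) a = (a * e s) ⊗ₜ[ℂ] e s - e s ⊗ₜ[ℂ] (e s * a)

/-- `Φ` is a (multiplicative) moment map for the double quasi-Poisson bracket. -/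
def IsQuasiMomentMap (br : A →ₗ[ℂ] A →ₗ[ℂ] A ⊗[ℂ] A) (e : I → A) (Φ : A) : Prop :=
  IsUnit Φ ∧ (Φ = ∑ s, e s * Φ * e s) ∧
  ∀ (s : I) (a : A),
    br (e s * Φ * e s) a = (2 : ℂ)⁻¹ • (
      (a * e s) ⊗ₜ[ℂ] (e s * Φ * e s) - e s ⊗ₜ[ℂ] (e s * Φ * e s * a)
      + (a * (e s * Φ * e s)) ⊗ₜ[ℂ] e s - (e s * Φ * e s) ⊗ₜ[ℂ] (e s * a))

/-- `φ` is an involutive anti-automorphism of `A` fixing the idempotents. -/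
def IsAntiInvolution (e : I → A) (φ : A →ₗ[ℂ] A) : Prop :=
  (∀ a b : A, φ (a * b) = φ b * φ a) ∧ (∀ a : A, φ (φ a) = a) ∧ (∀ s : I, φ (e s) = e s)

/-- Bracket-compatibility: `(φ ⊗ φ)(⟨⟨a,b⟩⟩) = ⟨⟨φ(a),φ(b)⟩⟩^∘`. -/
def IsBracketCompat (br : A →ₗ[ℂ] A →ₗ[ℂ] A ⊗[ℂ] A) (φ : A →ₗ[ℂ] A) : Prop :=
  ∀ a b : A, TensorProduct.map φ φ (br a b) = flipT (br (φ a) (φ b))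

/-- If `(A, ⟨⟨-,-⟩⟩, μ)` is a double Hamiltonian algebra over `A₀` and
`φ` is a bracket-compatible involutive anti-automorphism, then
`μ' = ½(μ − φ(μ))` is again a moment map, and `μ' + φ(μ') = 0`. -/
theorem shifted_moment_map
    (e : I → A) (he : IsCompleteOrthIdem e)
    (br : A →ₗ[ℂ] A →ₗ[ℂ] A ⊗[ℂ] A)
    (hbr : IsDoubleBracket br) (hlin : IsA0Linear br e) (hP : IsPoisson br)
    (μ : A) (hμ : IsMomentMap br e μ)
    (φ : A →ₗ[ℂ] A) (hφ : IsAntiInvolution e φ) (hcomp : IsBracketCompat br φ) :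
    IsMomentMap br e ((2 : ℂ)⁻¹ • (μ - φ μ)) ∧
    (2 : ℂ)⁻¹ • (μ - φ μ) + φ ((2 : ℂ)⁻¹ • (μ - φ μ)) = 0 := by

  obtain ⟨hφmul, hφinv, hφe⟩ := hφ
  obtain ⟨hμdec, hμbr⟩ := hμ
  have hflip2 : ∀ x : A ⊗[ℂ] A, flipT (flipT x) = x := by
    intro x
    induction x using TensorProduct.induction_on with
    | zero => simp
    | tmul a b => simp [flipT]
    | add x y hx hy => simp [map_add, hx, hy]
  have h1 : ∀ s : I, e s * φ μ * e s = φ (e s * μ * e s) := by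
    intro s
    rw [hφmul, hφmul, hφe, mul_assoc]
  have key : ∀ (s : I) (a : A),
      br (e s * φ μ * e s) a = e s ⊗ₜ[ℂ] (e s * a) - (a * e s) ⊗ₜ[ℂ] e s := by
    intro s a
    have h2 := hcomp (e s * μ * e s) (φ a)
    rw [hφinv a, ← h1 s] at h2
    have h3 : br (e s * φ μ * e s) a
        = flipT (TensorProduct.map φ φ (br (e s * μ * e s) (φ a))) := by
      rw [h2, hflip2]
    rw [h3, hμbr s (φ a), map_sub, TensorProduct.map_tmul, TensorProduct.map_tmul,
      hφmul, hφmul, hφe, hφinv, map_sub]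
    simp [flipT]
  have hdec' : (2 : ℂ)⁻¹ • (μ - φ μ) = ∑ s, e s * ((2 : ℂ)⁻¹ • (μ - φ μ)) * e s := by
    have hφdec : φ μ = ∑ s, e s * φ μ * e s := by
      conv_lhs => rw [hμdec, map_sum]
      exact Finset.sum_congr rfl fun s _ => (h1 s).symm
    calc (2 : ℂ)⁻¹ • (μ - φ μ)
        = ∑ s, (2 : ℂ)⁻¹ • (e s * μ * e s - e s * φ μ * e s) := by
          rw [← Finset.smul_sum]
          congr 1
          rw [Finset.sum_sub_distrib, ← hμdec, ← hφdec]
      _ = ∑ s, e s * ((2 : ℂ)⁻¹ • (μ - φ μ)) * e s := by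
          refine Finset.sum_congr rfl fun s _ => ?_
          rw [mul_smul_comm, smul_mul_assoc, mul_sub, sub_mul]
  refine ⟨⟨hdec', fun s a => ?_⟩, ?_⟩
  · have hes : e s * ((2 : ℂ)⁻¹ • (μ - φ μ)) * e s
        = (2 : ℂ)⁻¹ • (e s * μ * e s - e s * φ μ * e s) := by
      rw [mul_smul_comm, smul_mul_assoc, mul_sub, sub_mul]
    rw [hes, map_smul, LinearMap.smul_apply, map_sub, LinearMap.sub_apply,
      hμbr s a, key s a]
    module
  · rw [map_smul, map_sub, hφinv]
    module


end Stmt3
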